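/- Let X = {x_1, …, x_M} be a set of M ≥ 2 distinct points in ℝ^d. Suppose z ∈ B(μ(X), α·A(X)) for some 0 < α < 1 and z ∉ X. Let x_k be a point of X farthest from (z+Σ(X))/(M+1). Then F(X) − F({z} ∪ (X \ {x_k})) ≥ (1−α)·((M−1)α + M + 1)·A(X)² > ((1−α)/M)·F(X). Here B(c,ρ) denotes the open Euclidean ball of radius ρ centered at c. -/

import Mathlib

/-!
Let `c = (z + Σ(X))/(M+1)` be the center of mass of `X ∪ {z}` and `b = ‖z - μ(X)‖ < α A(X)`.
Expanding `F` around `c` (Lagrange's identity `F(S) = |S| Σ ‖x - c‖² - ‖Σ (x - c)‖²`) shows that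
swapping `x_k` for `z` lowers `F` by exactly `(M+1)(‖x_k - c‖² - ‖z - c‖²)`. Since
`c - μ(X) = (z - μ(X))/(M+1)`, we have `‖z - c‖ = M b/(M+1)`, and since `x_k` is a farthest point
of `X` from `c`, `‖x_k - c‖ ≥ A(X) - b/(M+1)`. The resulting lower bound decreases in `b`, and at
`b = α A(X)` it is `(1-α)((M-1)α + M + 1) A(X)²`. The second inequality follows from
`F(X) = M Σ ‖x - μ(X)‖² ≤ M² A(X)²` and `(M-1)α + 1 > 0`.
-/

open Finset Metric MeasureTheory
open scoped BigOperators ENNReal RealInnerProductSpace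

noncomputable section

instance {d : ℕ} : DecidableEq (EuclideanSpace ℝ (Fin d)) := Classical.decEq _

/-- `E d` is the Euclidean space `ℝ^d`. -/
abbrev E (d : ℕ) : Type := EuclideanSpace ℝ (Fin d)

/-- `Σ(X)`, the sum of the points of `X`. -/
def csum {d : ℕ} (X : Finset (E d)) : E d := ∑ x ∈ X, x

/-- `μ(X)`, the center of mass of `X`. -/
def cm {d : ℕ} (X : Finset (E d)) : E d := (X.card : ℝ)⁻¹ • csum X

/-- `F(X) = Σ_{i<j} ‖x_i - x_j‖²`, the moment of inertia of `X`. -/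
def inertia {d : ℕ} (X : Finset (E d)) : ℝ := (∑ x ∈ X, ∑ y ∈ X, ‖x - y‖ ^ 2) / 2

/-- `A(X) = max_{w ∈ X} ‖w - μ(X)‖`. -/
def Amax {d : ℕ} (X : Finset (E d)) : ℝ := sSup ((fun w => ‖w - cm X‖) '' (X : Set (E d)))

/-- `D(X) = max_{i ≠ j} ‖x_i - x_j‖`. -/
def Dmax {d : ℕ} (X : Finset (E d)) : ℝ :=
  sSup {r : ℝ | ∃ x ∈ X, ∃ y ∈ X, x ≠ y ∧ r = ‖x - y‖}

/-- `d(X) = min_{i ≠ j} ‖x_i - x_j‖`. -/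
def dmin {d : ℕ} (X : Finset (E d)) : ℝ :=
  sInf {r : ℝ | ∃ x ∈ X, ∃ y ∈ X, x ≠ y ∧ r = ‖x - y‖}

/-- `Keep(X;B) = { x ∈ B : ‖x - μ({x} ∪ X)‖ < max_{s ∈ X} ‖s - μ({x} ∪ X)‖ }`. -/
def Keep {d : ℕ} (X : Finset (E d)) (B : Set (E d)) : Set (E d) :=
  {x ∈ B | ‖x - cm (insert x X)‖ <
    sSup ((fun s => ‖s - cm (insert x X)‖) '' (X : Set (E d)))}

/-- `V(k)`, the Lebesgue measure of the unit ball in `ℝ^k` (so `V 0 = 1`). -/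
def ubVol (k : ℕ) : ℝ := (volume (Metric.ball (0 : EuclideanSpace ℝ (Fin k)) 1)).toReal

theorem sum_sum_norm_sub_sq {ι V : Type*} [NormedAddCommGroup V] [InnerProductSpace ℝ V]
    (s : Finset ι) (f : ι → V) (p : V) :
    ∑ i ∈ s, ∑ j ∈ s, ‖f i - f j‖ ^ 2 =
      2 * (#s * ∑ i ∈ s, ‖f i - p‖ ^ 2 - ‖∑ i ∈ s, (f i - p)‖ ^ 2) := by
  have hsplit : ∀ i j, f i - f j = (f i - p) - (f j - p) := fun _ _ => by abel
  have hinner : ∑ i ∈ s, ∑ j ∈ s, ⟪f i - p, f j - p⟫ = ‖∑ i ∈ s, (f i - p)‖ ^ 2 := by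
    simp_rw [← inner_sum, ← sum_inner, real_inner_self_eq_norm_sq]
  simp only [hsplit, norm_sub_sq_real, sum_add_distrib, sum_sub_distrib, ← mul_sum, hinner,
    sum_const, nsmul_eq_mul]
  ring

lemma inertia_eq_card_mul_sum_sub_sq_norm_sum {d : ℕ} (S : Finset (E d)) (p : E d) :
    inertia S = #S * ∑ x ∈ S, ‖x - p‖ ^ 2 - ‖∑ x ∈ S, (x - p)‖ ^ 2 := by
  rw [inertia, sum_sum_norm_sub_sq S (fun x => x) p]
  ring

section CenterOfMass

variable {d : ℕ} (X : Finset (E d))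

lemma csum_eq_card_smul_cm : csum X = (#X : ℝ) • cm X := by
  rcases X.eq_empty_or_nonempty with rfl | hne
  · simp [csum, cm]
  · rw [cm, smul_inv_smul₀ (by exact_mod_cast hne.card_pos.ne')]

lemma sum_sub_cm_eq_zero : ∑ x ∈ X, (x - cm X) = 0 := by
  rw [sum_sub_distrib, sum_const, ← Nat.cast_smul_eq_nsmul ℝ, ← csum_eq_card_smul_cm, csum,
    sub_self]

lemma inertia_eq_card_mul_sum_norm_sub_cm_sq :
    inertia X = #X * ∑ x ∈ X, ‖x - cm X‖ ^ 2 := by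
  rw [inertia_eq_card_mul_sum_sub_sq_norm_sum X (cm X), sum_sub_cm_eq_zero, norm_zero]
  ring

variable {X}

lemma cm_insert_of_notMem {z : E d} (hz : z ∉ X) :
    cm (insert z X) = ((#X : ℝ) + 1)⁻¹ • (z + csum X) := by
  rw [cm, csum, sum_insert hz, card_insert_of_notMem hz, csum]
  push_cast
  rfl

lemma cm_insert_sub_cm {z : E d} (hz : z ∉ X) :
    cm (insert z X) - cm X = ((#X : ℝ) + 1)⁻¹ • (z - cm X) := by
  rw [cm_insert_of_notMem hz, csum_eq_card_smul_cm]
  have : (#X : ℝ) + 1 ≠ 0 := by positivity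
  match_scalars <;> field_simp; ring

lemma card_add_one_mul_norm_cm_insert_sub_cm {z : E d} (hz : z ∉ X) :
    (#X + 1) * ‖cm (insert z X) - cm X‖ = ‖z - cm X‖ := by
  rw [cm_insert_sub_cm hz, norm_smul, Real.norm_of_nonneg (by positivity), ← mul_assoc,
    mul_inv_cancel₀ (by positivity), one_mul]

lemma card_add_one_mul_norm_sub_cm_insert {z : E d} (hz : z ∉ X) :
    (#X + 1) * ‖z - cm (insert z X)‖ = #X * ‖z - cm X‖ := by
  have hsub : z - cm (insert z X) = (#X / (#X + 1) : ℝ) • (z - cm X) := by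
    rw [← sub_sub_sub_cancel_right z (cm (insert z X)) (cm X), cm_insert_sub_cm hz]
    have : (#X : ℝ) + 1 ≠ 0 := by positivity
    match_scalars <;> field_simp <;> ring
  rw [hsub, norm_smul, Real.norm_of_nonneg (by positivity), ← mul_assoc,
    mul_div_cancel₀ _ (by positivity)]

lemma norm_sub_cm_le_Amax {x : E d} (hx : x ∈ X) : ‖x - cm X‖ ≤ Amax X :=
  le_csSup ((X.finite_toSet.image _).bddAbove) ⟨x, hx, rfl⟩

lemma exists_norm_sub_cm_eq_Amax (hX : X.Nonempty) : ∃ w ∈ X, ‖w - cm X‖ = Amax X :=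
  ((coe_nonempty.mpr hX).image _).csSup_mem (X.finite_toSet.image _)

lemma Amax_pos (hX : 1 < #X) : 0 < Amax X := by
  obtain ⟨u, hu, v, hv, huv⟩ := one_lt_card.mp hX
  by_contra! h
  have hcm : ∀ x ∈ X, x = cm X := fun x hx =>
    sub_eq_zero.mp (norm_le_zero_iff.mp ((norm_sub_cm_le_Amax hx).trans h))
  exact huv ((hcm u hu).trans (hcm v hv).symm)

lemma inertia_le_card_sq_mul_Amax_sq : inertia X ≤ #X ^ 2 * Amax X ^ 2 := by
  rw [inertia_eq_card_mul_sum_norm_sub_cm_sq]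
  calc (#X : ℝ) * ∑ x ∈ X, ‖x - cm X‖ ^ 2 ≤ #X * ∑ _x ∈ X, Amax X ^ 2 := by
        gcongr with x hx
        exact norm_sub_cm_le_Amax hx
    _ = #X ^ 2 * Amax X ^ 2 := by rw [sum_const, nsmul_eq_mul]; ring

lemma Amax_le_of_forall_norm_sub_le (hX : X.Nonempty) {p y : E d}
    (hy : ∀ x ∈ X, ‖x - p‖ ≤ ‖y - p‖) : Amax X ≤ ‖y - p‖ + ‖p - cm X‖ := by
  obtain ⟨w, hw, hwA⟩ := exists_norm_sub_cm_eq_Amax hX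
  calc Amax X = ‖(w - p) + (p - cm X)‖ := by rw [← hwA, sub_add_sub_cancel]
    _ ≤ ‖w - p‖ + ‖p - cm X‖ := norm_add_le _ _
    _ ≤ ‖y - p‖ + ‖p - cm X‖ := by gcongr; exact hy w hw

lemma inertia_sub_inertia_insert_erase {z xk : E d} (hz : z ∉ X) (hxk : xk ∈ X) :
    inertia X - inertia (insert z (X.erase xk)) =
      (#X + 1) * (‖xk - cm (insert z X)‖ ^ 2 - ‖z - cm (insert z X)‖ ^ 2) := by
  set c := cm (insert z X)
  have hz' : z ∉ X.erase xk := fun h => hz (mem_of_mem_erase h)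
  have hsumX : ∑ x ∈ X, (x - c) = c - z := by
    have := sum_sub_cm_eq_zero (insert z X)
    rw [sum_insert hz] at this
    rw [← sub_eq_zero, ← this]; abel
  have hcard : (#(insert z (X.erase xk)) : ℝ) = #X := by
    rw [card_insert_of_notMem hz', card_erase_of_mem hxk,
      Nat.sub_add_cancel (card_pos.mpr ⟨xk, hxk⟩)]
  rw [inertia_eq_card_mul_sum_sub_sq_norm_sum X c, inertia_eq_card_mul_sum_sub_sq_norm_sum _ c,
    hcard, sum_insert hz', sum_insert hz', sum_erase_eq_sub hxk, sum_erase_eq_sub hxk, hsumX,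
    show z - c + (c - z - (xk - c)) = -(xk - c) by abel, norm_neg, norm_sub_rev c z]
  ring

end CenterOfMass

lemma one_sub_mul_mul_sq_le_mul_sq_sub_sq {M A α b r s : ℝ} (hM : 0 ≤ M) (hA : 0 ≤ A)
    (hα : α ≤ 1) (hb0 : 0 ≤ b) (hb : b ≤ α * A) (hr : (M + 1) * A ≤ (M + 1) * r + b)
    (hs : (M + 1) * s = M * b) :
    (1 - α) * ((M - 1) * α + M + 1) * A ^ 2 ≤ (M + 1) * (r ^ 2 - s ^ 2) := by
  have hM1 : 0 < M + 1 := by linarith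
  have hα0 : 0 ≤ α * A - b := by linarith
  -- `((M + 1) * A - b) ^ 2 - (M * b) ^ 2` decreases in `b`, so `b = α * A` is the worst case.
  have hdecr : ((M + 1) * A - α * A) ^ 2 - (M * (α * A)) ^ 2 ≤
      ((M + 1) * A - b) ^ 2 - (M * b) ^ 2 := by
    have hfactor : 0 ≤ 2 * (M + 1) * A - (α * A + b) + M ^ 2 * (α * A + b) := by nlinarith
    nlinarith [mul_nonneg hα0 hfactor]
  have hsq : ((M + 1) * A - b) ^ 2 ≤ ((M + 1) * r) ^ 2 :=
    pow_le_pow_left₀ (by nlinarith) (by linarith) 2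
  refine le_of_mul_le_mul_left ?_ hM1
  calc (M + 1) * ((1 - α) * ((M - 1) * α + M + 1) * A ^ 2)
      = ((M + 1) * A - α * A) ^ 2 - (M * (α * A)) ^ 2 := by ring
    _ ≤ ((M + 1) * r) ^ 2 - ((M + 1) * s) ^ 2 := by rw [hs]; linarith
    _ = (M + 1) * ((M + 1) * (r ^ 2 - s ^ 2)) := by ring

/-- Lemma 7 of the paper: if the new point `z` lies in `B(μ(X), α·A(X))` with
`0 < α < 1`, then replacing a farthest point `x_k` from `(z+Σ(X))/(M+1)`
decreases the moment of inertia by at least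
`(1-α)·((M-1)α + M+1)·A(X)² > ((1-α)/M)·F(X)`. -/
theorem stmt_7 (d : ℕ) (X : Finset (E d)) (hX : 2 ≤ X.card)
    (α : ℝ) (hα0 : 0 < α) (hα1 : α < 1)
    (z : E d) (hz : z ∉ X) (hzball : z ∈ Metric.ball (cm X) (α * Amax X))
    (xk : E d) (hxk : xk ∈ X)
    (hmax : ∀ x ∈ X, ‖x - ((X.card : ℝ) + 1)⁻¹ • (z + csum X)‖ ≤
      ‖xk - ((X.card : ℝ) + 1)⁻¹ • (z + csum X)‖) :
    (1 - α) * (((X.card : ℝ) - 1) * α + (X.card : ℝ) + 1) * Amax X ^ 2 ≤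
        inertia X - inertia (insert z (X.erase xk)) ∧
    ((1 - α) / (X.card : ℝ)) * inertia X <
        (1 - α) * (((X.card : ℝ) - 1) * α + (X.card : ℝ) + 1) * Amax X ^ 2 := by
  have hM : (2 : ℝ) ≤ #X := by exact_mod_cast hX
  have hA : 0 < Amax X := Amax_pos hX
  have hb : ‖z - cm X‖ < α * Amax X := by rwa [mem_ball, dist_eq_norm] at hzball
  rw [← cm_insert_of_notMem hz] at hmax
  have hfar := Amax_le_of_forall_norm_sub_le ⟨xk, hxk⟩ hmax
  have hcm := card_add_one_mul_norm_cm_insert_sub_cm hz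
  refine ⟨?_, ?_⟩
  · rw [inertia_sub_inertia_insert_erase hz hxk]
    refine one_sub_mul_mul_sq_le_mul_sq_sub_sq (by linarith) hA.le hα1.le (norm_nonneg _) hb.le
      ?_ (card_add_one_mul_norm_sub_cm_insert hz)
    nlinarith
  · calc (1 - α) / #X * inertia X ≤ (1 - α) / #X * (#X ^ 2 * Amax X ^ 2) := by
          gcongr
          exact inertia_le_card_sq_mul_Amax_sq
      _ = (1 - α) * #X * Amax X ^ 2 := by field_simp
      _ < (1 - α) * ((#X - 1) * α + #X + 1) * Amax X ^ 2 := by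
          gcongr
          nlinarith
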